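/- In every execution of algorithm Counting-Backoff against a 1-activating adversary, the following invariant holds at the end of every round in whose beginning some k > 0 stations are active: each station that remains active and has a positive backoff_counter holds a distinct value from the interval [1, k]; these values are assigned in the inverse order of the stations' activation times (the later a station was activated, the smaller its value); and the only value in [1, k] that may be unassigned is 1. Hence the positive values of backoff_counter may be interpreted as positions on a global last-in-first-out stack of active stations, with the station whose backoff_counter equals 1 at the top. -/

import Mathlib

/-- Admissibility of a 1-activating injection pattern `a` (in round `t`, a fresh passive
station labelled `t` is activated with `a t` packets, when `a t > 0`) for the leaky-bucket
adversary of type `(ρ, b)`: in every contiguous interval of rounds the total number of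
injected packets is at most `ρ·|τ| + b`. -/
def Admissible (ρ : ℝ) (b : ℕ) (a : ℕ → ℕ) : Prop :=
  ∀ s n : ℕ, ((∑ t ∈ Finset.Ico s (s + n), a t : ℕ) : ℝ) ≤ ρ * n + b

/-- One round of algorithm Counting-Backoff on a channel with collision detection.
A configuration `c` assigns to every station `v` (identified with its activation round)
its number `c.1 v` of pending packets and its integer `c.2 v` = backoff_counter, both at
the beginning of the round.  An active station transmits iff its backoff_counter is `≤ 1`;
after a collision every active station increments its counter, after a silent round it
decrements it; a station whose own packet was heard sets the counter to 1 if it is still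
active, and a passive station has counter 0.  At the end of round `t` the station `t`
receives its `a t` injected packets (with counter 0). -/
def cbStep (a : ℕ → ℕ) (t : ℕ) (c : (ℕ → ℕ) × (ℕ → ℤ)) : (ℕ → ℕ) × (ℕ → ℤ) :=
  let pend := c.1
  let ctr := c.2
  let tx : Finset ℕ := (Finset.range t).filter fun v => 0 < pend v ∧ ctr v ≤ 1
  (fun v => (if v ∈ tx ∧ tx.card = 1 then pend v - 1 else pend v) + (if v = t then a t else 0),
   fun v =>
    if pend v = 0 then 0
    else if v ∈ tx ∧ tx.card = 1 then (if pend v - 1 = 0 then 0 else 1)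
    else if 2 ≤ tx.card then ctr v + 1
    else if tx.card = 0 then ctr v - 1
    else ctr v)

/-- The configuration of the execution of Counting-Backoff against the 1-activating
injection pattern `a` at the beginning of round `t`: `(cbCfg a t).1 v` is the number of
packets pending at station `v` and `(cbCfg a t).2 v` is its backoff_counter. -/
def cbCfg (a : ℕ → ℕ) : ℕ → (ℕ → ℕ) × (ℕ → ℤ)
  | 0 => (fun _ => 0, fun _ => 0)
  | t + 1 => cbStep a t (cbCfg a t)

/-! At the beginning of every round the counters of the active stations are nonnegative and
strictly decreasing in activation time, and the counters `≥ 2` that occur form an interval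
`[2, m]`. The transmitters `T` are the active stations with counter `≤ 1`, so there are at most
two of them, and in a silent round, a successful round and a collision alike every other active
station's counter moves by `#T - 1`; this preserves the invariant. As the counters of the waiting
stations `W` (counter `≥ 2`) are exactly `2, …, #W + 1`, no new counter exceeds `#T + #W = k`,
and the oldest active station reaches `k`. -/

open Finset

namespace CountingBackoff

def active (t : ℕ) (c : (ℕ → ℕ) × (ℕ → ℤ)) : Finset ℕ :=
  (range t).filter fun v => 0 < c.1 v

def transmitters (t : ℕ) (c : (ℕ → ℕ) × (ℕ → ℤ)) : Finset ℕ :=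
  (range t).filter fun v => 0 < c.1 v ∧ c.2 v ≤ 1

def waiting (t : ℕ) (c : (ℕ → ℕ) × (ℕ → ℤ)) : Finset ℕ :=
  (active t c).filter fun v => 2 ≤ c.2 v

abbrev IsHeard (t : ℕ) (c : (ℕ → ℕ) × (ℕ → ℤ)) (v : ℕ) : Prop :=
  v ∈ transmitters t c ∧ #(transmitters t c) = 1

structure StackInvariant (t : ℕ) (c : (ℕ → ℕ) × (ℕ → ℤ)) : Prop where
  pending_eq_zero_of_le : ∀ v, t ≤ v → c.1 v = 0
  counter_nonneg : ∀ v, 0 < c.1 v → 0 ≤ c.2 v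
  strictAntiOn : StrictAntiOn c.2 {v | 0 < c.1 v}
  exists_counter_eq : ∀ v j, 0 < c.1 v → 2 ≤ j → j ≤ c.2 v → ∃ w, 0 < c.1 w ∧ c.2 w = j

theorem card_transmitters_add_card_waiting (t : ℕ) (c : (ℕ → ℕ) × (ℕ → ℤ)) :
    #(transmitters t c) + #(waiting t c) = #(active t c) := by
  have hT : transmitters t c = (active t c).filter fun v => c.2 v ≤ 1 := by
    ext v
    simp [transmitters, active, and_assoc]
  rw [hT, waiting, ← card_filter_add_card_filter_not (s := active t c) (fun v => c.2 v ≤ 1),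
    filter_congr fun v _ => show 2 ≤ c.2 v ↔ ¬c.2 v ≤ 1 by omega]

variable {a : ℕ → ℕ} {t v : ℕ} {c : (ℕ → ℕ) × (ℕ → ℤ)}

theorem cbStep_fst (a : ℕ → ℕ) (t : ℕ) (c : (ℕ → ℕ) × (ℕ → ℤ)) (v : ℕ) :
    (cbStep a t c).1 v =
      (if IsHeard t c v then c.1 v - 1 else c.1 v) + (if v = t then a t else 0) :=
  rfl

theorem cbStep_snd (a : ℕ → ℕ) (t : ℕ) (c : (ℕ → ℕ) × (ℕ → ℤ)) (v : ℕ) :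
    (cbStep a t c).2 v =
      if c.1 v = 0 then 0
      else if IsHeard t c v then (if c.1 v - 1 = 0 then 0 else 1)
      else if 2 ≤ #(transmitters t c) then c.2 v + 1
      else if #(transmitters t c) = 0 then c.2 v - 1
      else c.2 v :=
  rfl

theorem cbStep_snd_of_pending_eq_zero (hv : c.1 v = 0) : (cbStep a t c).2 v = 0 := by
  rw [cbStep_snd, if_pos hv]

theorem pos_of_cbStep_snd_pos (hv : 0 < (cbStep a t c).2 v) : 0 < c.1 v := by
  by_contra h
  rw [cbStep_snd_of_pending_eq_zero (by omega)] at hv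
  exact hv.false

theorem pos_of_cbStep_fst_pos (hvt : v ≠ t) (hv : 0 < (cbStep a t c).1 v) : 0 < c.1 v := by
  rw [cbStep_fst, if_neg hvt] at hv
  split_ifs at hv <;> omega

theorem cbStep_snd_le_one_of_isHeard (hv : IsHeard t c v) : (cbStep a t c).2 v ≤ 1 := by
  rw [cbStep_snd]
  split_ifs <;> simp_all

theorem cbStep_snd_of_not_isHeard (hv : 0 < c.1 v) (hheard : ¬IsHeard t c v)
    (hT : #(transmitters t c) ≤ 2) :
    (cbStep a t c).2 v = c.2 v + #(transmitters t c) - 1 := by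
  rw [cbStep_snd, if_neg hv.ne', if_neg hheard]
  split_ifs <;> omega

namespace StackInvariant

variable (hc : StackInvariant t c)
include hc

theorem lt_of_pos (hv : 0 < c.1 v) : v < t := by
  by_contra h
  rw [hc.pending_eq_zero_of_le v (by omega)] at hv
  exact hv.false

theorem mem_active : v ∈ active t c ↔ 0 < c.1 v := by
  simp only [active, mem_filter, mem_range, and_iff_right_iff_imp]
  exact hc.lt_of_pos

theorem mem_transmitters (hv : 0 < c.1 v) : v ∈ transmitters t c ↔ c.2 v ≤ 1 := by
  simp [transmitters, hc.lt_of_pos hv, hv]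

theorem two_le_of_notMem_transmitters (hv : 0 < c.1 v) (hvT : v ∉ transmitters t c) :
    2 ≤ c.2 v := by
  rw [hc.mem_transmitters hv] at hvT
  omega

theorem card_le_card_Icc {s : Finset ℕ} {lo hi : ℤ}
    (hs : ∀ v ∈ s, 0 < c.1 v ∧ c.2 v ∈ Icc lo hi) : #s ≤ #(Icc lo hi) :=
  card_le_card_of_injOn c.2 (fun v hv => (hs v hv).2)
    (hc.strictAntiOn.injOn.mono fun v hv => (hs v hv).1)

theorem card_transmitters_le_two : #(transmitters t c) ≤ 2 := by
  have := hc.card_le_card_Icc (s := transmitters t c) (lo := 0) (hi := 1) fun v hv => by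
    obtain ⟨-, hv, hv1⟩ := mem_filter.1 hv
    exact ⟨hv, mem_Icc.2 ⟨hc.counter_nonneg v hv, hv1⟩⟩
  simpa using this

theorem exists_counter_eq_one (hT : #(transmitters t c) = 2) :
    ∃ w ∈ transmitters t c, c.2 w = 1 := by
  by_contra! h
  have := hc.card_le_card_Icc (s := transmitters t c) (lo := 0) (hi := 0) fun v hv => by
    obtain ⟨-, hv0, hv1⟩ := mem_filter.1 hv
    have := h v hv
    have := hc.counter_nonneg v hv0
    exact ⟨hv0, mem_Icc.2 ⟨by omega, by omega⟩⟩
  simp at this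
  omega

theorem card_Icc_le_card_waiting (hv : 0 < c.1 v) : #(Icc 2 (c.2 v)) ≤ #(waiting t c) := by
  calc #(Icc 2 (c.2 v)) ≤ #((waiting t c).image c.2) := card_le_card fun j hj => by
        obtain ⟨hj2, hjv⟩ := mem_Icc.1 hj
        obtain ⟨w, hw, rfl⟩ := hc.exists_counter_eq v j hv hj2 hjv
        exact mem_image_of_mem _ (mem_filter.2 ⟨hc.mem_active.2 hw, hj2⟩)
    _ ≤ #(waiting t c) := card_image_le

theorem card_waiting_le {m : ℤ} (hm : ∀ w, 0 < c.1 w → c.2 w ≤ m) :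
    #(waiting t c) ≤ #(Icc 2 m) :=
  hc.card_le_card_Icc fun w hw => by
    obtain ⟨hw, hw2⟩ := mem_filter.1 hw
    have hw := hc.mem_active.1 hw
    exact ⟨hw, mem_Icc.2 ⟨hw2, hm w hw⟩⟩

theorem cbStep_fst_of_not_isHeard (hv : 0 < c.1 v) (hheard : ¬IsHeard t c v) :
    (cbStep a t c).1 v = c.1 v := by
  rw [cbStep_fst, if_neg hheard, if_neg (hc.lt_of_pos hv).ne, add_zero]

theorem cbStep_fst_eq_zero (hv : t + 1 ≤ v) : (cbStep a t c).1 v = 0 := by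
  rw [cbStep_fst, if_neg (show v ≠ t by omega), hc.pending_eq_zero_of_le v (by omega)]
  split_ifs <;> rfl

theorem one_le_cbStep_snd (hv : 0 < c.1 v) (hv' : 0 < (cbStep a t c).1 v) :
    1 ≤ (cbStep a t c).2 v := by
  by_cases hheard : IsHeard t c v
  · rw [cbStep_fst, if_pos hheard, if_neg (hc.lt_of_pos hv).ne] at hv'
    rw [cbStep_snd, if_neg hv.ne', if_pos hheard, if_neg (by omega)]
  rw [cbStep_snd_of_not_isHeard hv hheard hc.card_transmitters_le_two]
  have := hc.counter_nonneg v hv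
  by_cases hvT : v ∈ transmitters t c
  · have : #(transmitters t c) ≠ 1 := fun h => hheard ⟨hvT, h⟩
    have : 0 < #(transmitters t c) := card_pos.2 ⟨v, hvT⟩
    omega
  · have := hc.two_le_of_notMem_transmitters hv hvT
    omega

theorem strictAntiOn_cbStep :
    StrictAntiOn (cbStep a t c).2 {v | 0 < (cbStep a t c).1 v} := by
  intro v (hv : 0 < _) w (hw : 0 < _) hvw
  have hwt : w ≤ t := by
    by_contra
    rw [hc.cbStep_fst_eq_zero (by omega)] at hw
    exact hw.false
  have hv₀ := pos_of_cbStep_fst_pos (by omega) hv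
  obtain hwt | rfl := hwt.lt_or_eq
  swap
  · rw [cbStep_snd_of_pending_eq_zero (hc.pending_eq_zero_of_le _ le_rfl)]
    exact hc.one_le_cbStep_snd hv₀ hv
  have hw₀ := pos_of_cbStep_fst_pos hwt.ne hw
  have hlt := hc.strictAntiOn hv₀ hw₀ hvw
  have hT := hc.card_transmitters_le_two
  have hheard_v : ¬IsHeard t c v := fun hheard => by
    have hwT : w ∈ transmitters t c :=
      (hc.mem_transmitters hw₀).2 (((hc.mem_transmitters hv₀).1 hheard.1).trans' hlt.le)
    exact hvw.ne (card_le_one.1 hheard.2.le v hheard.1 w hwT)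
  rw [cbStep_snd_of_not_isHeard hv₀ hheard_v hT]
  by_cases hheard_w : IsHeard t c w
  · have hvT : v ∉ transmitters t c := fun hvT =>
      hvw.ne (card_le_one.1 hheard_w.2.le v hvT w hheard_w.1)
    have := hc.two_le_of_notMem_transmitters hv₀ hvT
    have := cbStep_snd_le_one_of_isHeard (a := a) hheard_w
    omega
  · rw [cbStep_snd_of_not_isHeard hw₀ hheard_w hT]
    omega

theorem exists_cbStep_snd_eq {j : ℤ} (hj : 2 ≤ j)
    (hjv : j ≤ (cbStep a t c).2 v) :
    ∃ w, 0 < (cbStep a t c).1 w ∧ (cbStep a t c).2 w = j := by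
  have hT := hc.card_transmitters_le_two
  have shift : ∀ w, 0 < c.1 w → ¬IsHeard t c w →
      0 < (cbStep a t c).1 w ∧ (cbStep a t c).2 w = c.2 w + #(transmitters t c) - 1 :=
    fun w hw hheard => ⟨(hc.cbStep_fst_of_not_isHeard hw hheard).symm ▸ hw,
      cbStep_snd_of_not_isHeard hw hheard hT⟩
  have hv₀ := pos_of_cbStep_snd_pos (by omega : 0 < (cbStep a t c).2 v)
  have hheard : ¬IsHeard t c v := fun hheard => by
    have := cbStep_snd_le_one_of_isHeard (a := a) hheard
    omega
  rw [(shift v hv₀ hheard).2] at hjv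
  by_cases hj' : 2 ≤ j - #(transmitters t c) + 1
  · obtain ⟨w, hw, hwj⟩ := hc.exists_counter_eq v _ hv₀ hj' (by omega)
    have hwT : w ∉ transmitters t c := fun hwT => by
      have := (hc.mem_transmitters hw).1 hwT
      omega
    obtain ⟨hw', hwj'⟩ := shift w hw fun h => hwT h.1
    exact ⟨w, hw', by omega⟩
  · -- a collision: the transmitter with counter `1` moves to `2`
    have hT2 : #(transmitters t c) = 2 := by omega
    obtain ⟨w, hwT, hw1⟩ := hc.exists_counter_eq_one hT2
    obtain ⟨hw', hwj'⟩ := shift w (mem_filter.1 hwT).2.1 fun h => by omega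
    exact ⟨w, hw', by omega⟩

theorem step : StackInvariant (t + 1) (cbStep a t c) where
  pending_eq_zero_of_le _ := hc.cbStep_fst_eq_zero
  counter_nonneg v hv :=
    if hv₀ : c.1 v = 0 then (cbStep_snd_of_pending_eq_zero hv₀).ge
    else (hc.one_le_cbStep_snd (Nat.pos_of_ne_zero hv₀) hv).trans' zero_le_one
  strictAntiOn := hc.strictAntiOn_cbStep
  exists_counter_eq _ _ _ := hc.exists_cbStep_snd_eq

theorem cbStep_snd_le_card_active (hv : 0 < c.1 v) :
    (cbStep a t c).2 v ≤ #(active t c) := by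
  have hk := card_transmitters_add_card_waiting t c
  have hT := hc.card_transmitters_le_two
  by_cases hheard : IsHeard t c v
  · have := cbStep_snd_le_one_of_isHeard (a := a) hheard
    have : 0 < #(active t c) := card_pos.2 ⟨v, hc.mem_active.2 hv⟩
    omega
  rw [cbStep_snd_of_not_isHeard hv hheard hT]
  by_cases hvT : v ∈ transmitters t c
  · have := (hc.mem_transmitters hv).1 hvT
    omega
  · have := hc.two_le_of_notMem_transmitters hv hvT
    have := hc.card_Icc_le_card_waiting hv
    rw [Int.card_Icc] at this
    omega

theorem exists_card_active_le_cbStep_snd (hk : 2 ≤ #(active t c)) :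
    ∃ u, 0 < (cbStep a t c).1 u ∧ (#(active t c) : ℤ) ≤ (cbStep a t c).2 u := by
  obtain ⟨u, hu, hmin⟩ : ∃ u ∈ active t c, ∀ w ∈ active t c, u ≤ w :=
    ⟨_, min'_mem _ (card_pos.1 (by omega)), fun w hw => min'_le _ _ hw⟩
  obtain ⟨w, hw, hwu⟩ := exists_mem_ne hk u
  have hu1 : 1 ≤ c.2 u := by
    have := hc.strictAntiOn (hc.mem_active.1 hu) (hc.mem_active.1 hw)
      ((hmin w hw).lt_of_ne hwu.symm)
    have := hc.counter_nonneg w (hc.mem_active.1 hw)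
    omega
  rw [hc.mem_active] at hu
  have hmax : ∀ w, 0 < c.1 w → c.2 w ≤ c.2 u := fun w hw =>
    hc.strictAntiOn.antitoneOn hu hw (hmin w (hc.mem_active.2 hw))
  have hW := hc.card_waiting_le hmax
  rw [Int.card_Icc] at hW
  have hsum := card_transmitters_add_card_waiting t c
  have hheard : ¬IsHeard t c u := fun hheard => by
    have := (hc.mem_transmitters hu).1 hheard.1
    omega
  refine ⟨u, (hc.cbStep_fst_of_not_isHeard hu hheard).symm ▸ hu, ?_⟩
  rw [cbStep_snd_of_not_isHeard hu hheard hc.card_transmitters_le_two]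
  omega

end StackInvariant

theorem stackInvariant_cbCfg (a : ℕ → ℕ) : ∀ t, StackInvariant t (cbCfg a t)
  | 0 => ⟨fun _ _ => rfl, fun _ hv => absurd hv (lt_irrefl 0),
      fun _ hv => absurd hv (lt_irrefl 0), fun _ _ hv => absurd hv (lt_irrefl 0)⟩
  | t + 1 => (stackInvariant_cbCfg a t).step

end CountingBackoff

open CountingBackoff in
theorem counting_backoff_stack_invariant_general (a : ℕ → ℕ) (t : ℕ) :
    let k : ℤ := ((Finset.range t).filter fun v => 0 < (cbCfg a t).1 v).card
    let S : Finset ℕ := ((Finset.range t).filter fun v => 0 < (cbCfg a t).1 v).filter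
      fun v => 0 < (cbCfg a (t + 1)).1 v ∧ 0 < (cbCfg a (t + 1)).2 v
    (∀ v ∈ S, 1 ≤ (cbCfg a (t + 1)).2 v ∧ (cbCfg a (t + 1)).2 v ≤ k) ∧
    (∀ v ∈ S, ∀ w ∈ S, v < w → (cbCfg a (t + 1)).2 w < (cbCfg a (t + 1)).2 v) ∧
    (∀ j : ℤ, 2 ≤ j → j ≤ k → ∃ v ∈ S, (cbCfg a (t + 1)).2 v = j) := by
  intro k S
  have hc := stackInvariant_cbCfg a t
  have hk : k = #(active t (cbCfg a t)) := rfl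
  have mem_S : ∀ v, v ∈ S ↔ 0 < (cbCfg a (t + 1)).1 v ∧ 0 < (cbCfg a (t + 1)).2 v := fun v =>
    mem_filter.trans <| and_iff_right_of_imp fun h => hc.mem_active.2 (pos_of_cbStep_snd_pos h.2)
  refine ⟨fun v hv => ?_, fun v hv w hw => ?_, fun j hj hjk => ?_⟩
  · exact ⟨(mem_S v).1 hv |>.2, hc.cbStep_snd_le_card_active (mem_filter.1 (mem_filter.1 hv).1).2⟩
  · exact (stackInvariant_cbCfg a (t + 1)).strictAntiOn ((mem_S v).1 hv).1 ((mem_S w).1 hw).1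
  · obtain ⟨u, hu, hku⟩ := hc.exists_card_active_le_cbStep_snd (by omega)
    obtain ⟨w, hw, hwj⟩ := (stackInvariant_cbCfg a (t + 1)).exists_counter_eq u j hu hj
      (hjk.trans hku)
    exact ⟨w, (mem_S w).2 ⟨hw, by omega⟩, hwj⟩

/-- stack invariant for Counting-Backoff: for every round `t` in whose
beginning `k > 0` stations are active, at the end of round `t` (the beginning of round
`t+1`), among the stations that were active at the beginning of the round, remain active
and have a positive backoff_counter: each counter value lies in `[1, k]`; the values are
assigned in the inverse order of activation times (a later-activated station has a smaller
value, in particular all values are distinct); and every value in `[2, k]` is assigned,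
i.e. the only value in `[1, k]` that may be unassigned is `1`.  Hence the positive values
of backoff_counter are positions on a global LIFO stack with counter `1` on top. -/
theorem counting_backoff_stack_invariant (a : ℕ → ℕ) (t : ℕ)
    (hk : 0 < ((Finset.range t).filter fun v => 0 < (cbCfg a t).1 v).card) :
    let k : ℤ := ((Finset.range t).filter fun v => 0 < (cbCfg a t).1 v).card
    let S : Finset ℕ := ((Finset.range t).filter fun v => 0 < (cbCfg a t).1 v).filter
      fun v => 0 < (cbCfg a (t + 1)).1 v ∧ 0 < (cbCfg a (t + 1)).2 v
    (∀ v ∈ S, 1 ≤ (cbCfg a (t + 1)).2 v ∧ (cbCfg a (t + 1)).2 v ≤ k) ∧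
    (∀ v ∈ S, ∀ w ∈ S, v < w → (cbCfg a (t + 1)).2 w < (cbCfg a (t + 1)).2 v) ∧
    (∀ j : ℤ, 2 ≤ j → j ≤ k → ∃ v ∈ S, (cbCfg a (t + 1)).2 v = j) :=
  counting_backoff_stack_invariant_general a t
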